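/- arXiv:1512.06660 — 7 statements merged into one kernel-verified Lean document; each statement's English description precedes it below -/
import Mathlib

section
/- For q ≥ 2 and even v = 2k, the Gaussian binomial coefficients satisfy [v choose k]_q > [v choose k-1]_q + [v choose k+1]_q. -/
/-- The Gaussian binomial coefficient `[n choose k]_q`. -/
def gaussBinom (q : ℕ) : ℕ → ℕ → ℕ
  | _, 0 => 1
  | 0, _ + 1 => 0
  | n + 1, k + 1 => gaussBinom q n k + q ^ (k + 1) * gaussBinom q n (k + 1)

lemma gaussBinom_zero (q n : ℕ) : gaussBinom q n 0 = 1 := by cases n <;> rfl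

lemma gaussBinom_eq_zero (q : ℕ) : ∀ n k : ℕ, n < k → gaussBinom q n k = 0 := by
  intro n
  induction n with
  | zero =>
    intro k hk
    obtain ⟨j, rfl⟩ := Nat.exists_eq_add_of_lt hk
    simp [gaussBinom]
  | succ n ih =>
    intro k hk
    obtain ⟨j, rfl⟩ : ∃ j, k = j + 1 := ⟨k - 1, by omega⟩
    simp [gaussBinom, ih j (by omega), ih (j+1) (by omega)]

lemma gaussBinom_pos (q : ℕ) : ∀ n k : ℕ, k ≤ n → 0 < gaussBinom q n k := by
  intro n
  induction n with
  | zero => intro k hk; interval_cases k; simp [gaussBinom]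
  | succ n ih =>
    intro k hk
    cases k with
    | zero => simp [gaussBinom_zero]
    | succ j =>
      have := ih j (by omega)
      simp [gaussBinom]
      omega

lemma gaussBinom_ratio (q : ℕ) (hq : 1 ≤ q) :
    ∀ n k : ℕ, (q ^ (k + 1) - 1) * gaussBinom q n (k + 1)
      = (q ^ (n - k) - 1) * gaussBinom q n k := by
  intro n
  induction n with
  | zero =>
    intro k
    simp [gaussBinom_eq_zero q 0 (k+1) (by omega)]
  | succ n ih =>
    intro k
    cases k with
    | zero =>
      have ih0 := ih 0
      show (q ^ 1 - 1) * gaussBinom q (n+1) 1 = _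
      rw [show gaussBinom q (n+1) 1 = gaussBinom q n 0 + q ^ 1 * gaussBinom q n 1 from rfl]
      simp only [gaussBinom_zero, pow_one, Nat.sub_zero, zero_add, mul_one] at *
      have h1 : 1 ≤ q ^ n := Nat.one_le_pow _ _ (by omega)
      have h2 : 1 ≤ q ^ (n+1) := Nat.one_le_pow _ _ (by omega)
      zify [hq, h1, h2] at ih0 ⊢
      linear_combination q * ih0
    | succ j =>
      rcases le_or_gt n j with hnj | hjn
      · rw [gaussBinom_eq_zero q (n+1) (j+1+1) (by omega),
          show n + 1 - (j + 1) = 0 from by omega]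
        simp
      · -- n ≥ j + 1
        obtain ⟨m, rfl⟩ : ∃ m, n = j + 1 + m := ⟨n - (j+1), by omega⟩
        have ih1 := ih (j+1)
        have ih2 := ih j
        rw [show j + 1 + m - (j + 1) = m from by omega] at ih1
        rw [show j + 1 + m - j = m + 1 from by omega] at ih2
        rw [show j + 1 + m + 1 - (j + 1) = m + 1 from by omega]
        rw [show gaussBinom q (j+1+m+1) (j+1+1)
              = gaussBinom q (j+1+m) (j+1) + q ^ (j+2) * gaussBinom q (j+1+m) (j+2) from rfl]
        rw [show gaussBinom q (j+1+m+1) (j+1)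
              = gaussBinom q (j+1+m) j + q ^ (j+1) * gaussBinom q (j+1+m) (j+1) from rfl]
        have h1 : 1 ≤ q ^ (j+2) := Nat.one_le_pow _ _ (by omega)
        have h2 : 1 ≤ q ^ (j+1) := Nat.one_le_pow _ _ (by omega)
        have h3 : 1 ≤ q ^ m := Nat.one_le_pow _ _ (by omega)
        have h4 : 1 ≤ q ^ (m+1) := Nat.one_le_pow _ _ (by omega)
        have e12 : j + 1 + 1 = j + 2 := rfl
        rw [e12] at ih1
        zify [h1, h2, h3, h4] at ih1 ih2 ⊢
        linear_combination q ^ (j+2) * ih1 + ih2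

theorem gaussBinom_middle_gt_sum (q k : ℕ) (hq : 2 ≤ q) (hk : 1 ≤ k) :
    gaussBinom q (2 * k) k >
      gaussBinom q (2 * k) (k - 1) + gaussBinom q (2 * k) (k + 1) := by
  obtain ⟨j, rfl⟩ : ∃ j, k = j + 1 := ⟨k - 1, by omega⟩
  have hq1 : 1 ≤ q := by omega
  have e1 := gaussBinom_ratio q hq1 (2 * (j+1)) (j+1)
  have e2 := gaussBinom_ratio q hq1 (2 * (j+1)) j
  rw [show 2 * (j+1) - (j+1) = j + 1 from by omega] at e1
  rw [show 2 * (j+1) - j = j + 2 from by omega] at e2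
  rw [show j + 1 + 1 = j + 2 from rfl] at e1
  simp only [Nat.add_sub_cancel]
  set A := gaussBinom q (2*(j+1)) j with hA
  set B := gaussBinom q (2*(j+1)) (j+1) with hB
  set C := gaussBinom q (2*(j+1)) (j+2) with hC
  -- e1 : (q^(j+2)-1) * C = (q^(j+1)-1) * B
  -- e2 : (q^(j+1)-1) * B = (q^(j+2)-1) * A
  have hApos : 0 < A := gaussBinom_pos q _ _ (by omega)
  have hpow2 : 0 < q ^ (j+2) - 1 := by
    have : 2 ≤ q ^ (j+2) := le_trans hq (Nat.le_self_pow (by omega) q)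
    omega
  have hCA : C = A := Nat.eq_of_mul_eq_mul_left hpow2 (e1.trans e2)
  show A + C < B
  rw [hCA]
  have key : (q ^ (j+1) - 1) * (A + A) < (q ^ (j+1) - 1) * B := by
    rw [e2]
    have hle : 2 * (q ^ (j+1) - 1) < q ^ (j+2) - 1 := by
      have h2q : 2 * q ^ (j+1) ≤ q ^ (j+2) := by
        calc 2 * q ^ (j+1) ≤ q * q ^ (j+1) := Nat.mul_le_mul_right _ hq
        _ = q ^ (j+2) := by ring
      have : 1 ≤ q ^ (j+1) := Nat.one_le_pow _ _ (by omega)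
      omega
    calc (q ^ (j+1) - 1) * (A + A) = 2 * (q ^ (j+1) - 1) * A := by ring
    _ < (q ^ (j+2) - 1) * A := (Nat.mul_lt_mul_right hApos).mpr hle
  have hpow1 : 0 < q ^ (j+1) - 1 := by
    have : 2 ≤ q ^ (j+1) := le_trans hq (Nat.le_self_pow (by omega) q)
    omega
  exact lt_of_mul_lt_mul_left key (by omega)
end

section
/- Every (v, M, 2δ; k)_q constant-dimension code, i.e., every set C of k-dimensional subspaces of F_q^v with pairwise subspace distance at least 2δ, satisfies M = #C ≤ [v choose k-δ+1]_q / [k choose k-δ+1]_q. -/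
open Module

lemma prod_shift_aux (q : ℕ) (a m : ℕ) :
    ∏ i ∈ Finset.range (m + 1), ((q : ℤ) ^ (a + 1) - q ^ i)
      = ((q : ℤ) ^ (a + 1) - 1) * ((q : ℤ) ^ m * ∏ i ∈ Finset.range m, ((q : ℤ) ^ a - q ^ i)) := by
  rw [Finset.prod_range_succ']
  have : ∀ i ∈ Finset.range m, ((q : ℤ) ^ (a + 1) - q ^ (i + 1)) = q * ((q : ℤ) ^ a - q ^ i) := by
    intro i _; ring
  rw [Finset.prod_congr rfl this, Finset.prod_mul_distrib, Finset.prod_const,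
    Finset.card_range]
  ring

lemma gauss_arith (q n : ℕ) : ∀ m : ℕ,
    (gaussBinom q n m : ℤ) * ∏ i ∈ Finset.range m, ((q : ℤ) ^ m - q ^ i)
      = ∏ i ∈ Finset.range m, ((q : ℤ) ^ n - q ^ i) := by
  induction n with
  | zero =>
    intro m
    cases m with
    | zero => simp [gaussBinom]
    | succ m =>
      rw [show gaussBinom q 0 (m+1) = 0 from rfl]
      have hz : ∏ i ∈ Finset.range (m + 1), ((q : ℤ) ^ (0:ℕ) - q ^ i) = 0 :=
        Finset.prod_eq_zero (Finset.mem_range.mpr (Nat.succ_pos m)) (by simp)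
      rw [hz]; simp
  | succ n ih =>
    intro m
    cases m with
    | zero => simp [gaussBinom]
    | succ m =>
      rw [show gaussBinom q (n+1) (m+1)
        = gaussBinom q n m + q ^ (m + 1) * gaussBinom q n (m+1) from rfl]
      have h1 := ih m
      have h2 := ih (m + 1)
      rw [prod_shift_aux q m m] at h2 ⊢
      rw [Finset.prod_range_succ] at h2
      rw [prod_shift_aux q n m]
      push_cast
      linear_combination ((q:ℤ)^m * ((q:ℤ)^(m+1) - 1)) * h1 + (q:ℤ)^(m+1) * h2

theorem card_subspaces_aux (F V : Type*) [Field F] [Fintype F] [AddCommGroup V] [Module F V]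
    [Finite V] (m : ℕ) (hm : m ≤ finrank F V) :
    (Nat.card {W : Submodule F V // finrank F W = m} : ℤ)
        * ∏ i ∈ Finset.range m, ((Fintype.card F : ℤ) ^ m - (Fintype.card F) ^ i)
      = ∏ i ∈ Finset.range m, ((Fintype.card F : ℤ) ^ (finrank F V) - (Fintype.card F) ^ i) := by
  classical
  haveI : Module.Finite F V := Module.finite_iff_finite.mpr ‹_›
  haveI : Finite (Submodule F V) :=
    Finite.of_injective (fun W : Submodule F V => (W : Set V)) SetLike.coe_injective
  haveI := Fintype.ofFinite {W : Submodule F V // finrank F W = m}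
  haveI := Fintype.ofFinite {s : Fin m → V // LinearIndependent F s}
  set q := Fintype.card F with hqdef
  set n := finrank F V with hndef
  let f : {s : Fin m → V // LinearIndependent F s} → {W : Submodule F V // finrank F W = m} :=
    fun s => ⟨Submodule.span F (Set.range s.1), by
      rw [finrank_span_eq_card s.2, Fintype.card_fin]⟩
  have fib : ∀ W : {W : Submodule F V // finrank F W = m},
      Nat.card {s // f s = W} = ∏ i ∈ Finset.range m, (q ^ m - q ^ i) := by
    intro W
    have e : {s // f s = W} ≃ {t : Fin m → ↥W.1 // LinearIndependent F t} := {
      toFun := fun s => ⟨fun i => ⟨s.1.1 i, by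
          have h : Submodule.span F (Set.range s.1.1) = W.1 := congrArg Subtype.val s.2
          rw [← h]; exact Submodule.subset_span (Set.mem_range_self i)⟩,
        LinearIndependent.of_comp W.1.subtype s.1.2⟩
      invFun := fun t => ⟨⟨fun i => (t.1 i : V), t.2.map' W.1.subtype (Submodule.ker_subtype _)⟩, by
        apply Subtype.ext
        show Submodule.span F (Set.range fun i => ((t.1 i : V))) = W.1
        have h1 : (Set.range fun i => ((t.1 i : V))) = W.1.subtype '' Set.range t.1 := by
          rw [← Set.range_comp]; rfl
        rw [h1, ← Submodule.map_span]
        have h2 : Submodule.span F (Set.range t.1) = ⊤ := by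
          apply Submodule.eq_top_of_finrank_eq
          rw [finrank_span_eq_card t.2, Fintype.card_fin, W.2]
        rw [h2, Submodule.map_subtype_top]⟩
      left_inv := fun s => by ext i; rfl
      right_inv := fun t => by ext i; rfl }
    rw [Nat.card_congr e]
    have hW : finrank F ↥W.1 = m := W.2
    have := card_linearIndependent (K := F) (V := ↥W.1) (k := m) (le_of_eq hW.symm)
    rw [this, hW, Finset.prod_range]
  have key : Nat.card {s : Fin m → V // LinearIndependent F s}
      = Nat.card {W : Submodule F V // finrank F W = m}
          * ∏ i ∈ Finset.range m, (q ^ m - q ^ i) := by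
    rw [Nat.card_congr (Equiv.sigmaFiberEquiv f).symm, Nat.card_eq_fintype_card,
      Fintype.card_sigma]
    rw [Finset.sum_congr rfl (fun W _ => ((Nat.card_eq_fintype_card).symm.trans (fib W)))]
    rw [Finset.sum_const, Finset.card_univ, smul_eq_mul, Nat.card_eq_fintype_card]
  have hli := card_linearIndependent (K := F) (V := V) (k := m) hm
  rw [hli, ← Finset.prod_range
    (fun i => Fintype.card F ^ finrank F V - Fintype.card F ^ i)] at key
  have cast1 : ∀ a : ℕ, m ≤ a → ((∏ i ∈ Finset.range m, (q ^ a - q ^ i) : ℕ) : ℤ)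
      = ∏ i ∈ Finset.range m, ((q : ℤ) ^ a - (q : ℤ) ^ i) := by
    intro a hma
    rw [Nat.cast_prod]
    refine Finset.prod_congr rfl (fun i hi => ?_)
    rw [Nat.cast_sub (Nat.pow_le_pow_right Fintype.card_pos
      (le_of_lt (lt_of_lt_of_le (Finset.mem_range.mp hi) hma)))]
    push_cast; ring
  rw [← cast1 n hm, ← cast1 m le_rfl, ← Nat.cast_mul, key]

theorem card_subspaces (F V : Type*) [Field F] [Fintype F] [AddCommGroup V] [Module F V]
    [Finite V] (m : ℕ) (hm : m ≤ finrank F V) :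
    Nat.card {W : Submodule F V // finrank F W = m}
      = gaussBinom (Fintype.card F) (finrank F V) m := by
  have h := card_subspaces_aux F V m hm
  have hg := gauss_arith (Fintype.card F) (finrank F V) m
  have hq : (1 : ℤ) < Fintype.card F := by exact_mod_cast Fintype.one_lt_card (α := F)
  have hpos : 0 < ∏ i ∈ Finset.range m, ((Fintype.card F : ℤ) ^ m - (Fintype.card F) ^ i) := by
    apply Finset.prod_pos
    intro i hi
    have : (Fintype.card F : ℤ) ^ i < (Fintype.card F : ℤ) ^ m :=
      pow_lt_pow_right₀ hq (Finset.mem_range.mp hi)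
    linarith
  have := mul_right_cancel₀ (ne_of_gt hpos) (h.trans hg.symm)
  exact_mod_cast this

/-- Anticode/packing bound for constant-dimension codes:
`M ≤ [v, k-δ+1]_q / [k, k-δ+1]_q`. -/
theorem constant_dimension_code_bound (q : ℕ) (F : Type*) [Field F] [Fintype F]
    (hq : Fintype.card F = q) (v k δ : ℕ) (hδ : 1 ≤ δ) (hk : δ ≤ k) (hkv : k ≤ v)
    (C : Set (Submodule F (Fin v → F)))
    (hdim : ∀ X ∈ C, finrank F X = k)
    (hdist : ∀ X ∈ C, ∀ Y ∈ C, X ≠ Y →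
      (2 * δ : ℤ) ≤ (finrank F X : ℤ) + finrank F Y - 2 * finrank F ↥(X ⊓ Y)) :
    C.ncard * gaussBinom q k (k - δ + 1) ≤ gaussBinom q v (k - δ + 1) := by
  classical
  subst hq
  set m := k - δ + 1 with hmdef
  have hmk : m ≤ k := by omega
  have hmv : m ≤ v := le_trans hmk hkv
  haveI : Finite (Submodule F (Fin v → F)) :=
    Finite.of_injective (fun W : Submodule F (Fin v → F) => (W : Set (Fin v → F)))
      SetLike.coe_injective
  haveI := Fintype.ofFinite (Submodule F (Fin v → F))
  have hfr : finrank F (Fin v → F) = v := Module.finrank_fin_fun F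
  -- total number of m-dimensional subspaces
  have hA : (Finset.univ.filter (fun W : Submodule F (Fin v → F) => finrank F W = m)).card
      = gaussBinom (Fintype.card F) v m := by
    rw [← Fintype.card_subtype, ← Nat.card_eq_fintype_card]
    have := card_subspaces F (Fin v → F) m (by rw [hfr]; exact hmv)
    rw [hfr] at this
    exact this
  -- number of m-dimensional subspaces of a codeword
  have hX : ∀ X ∈ C, (Finset.univ.filter
        (fun W : Submodule F (Fin v → F) => finrank F W = m ∧ W ≤ X)).card
      = gaussBinom (Fintype.card F) k m := by
    intro X hXC
    rw [← Fintype.card_subtype, ← Nat.card_eq_fintype_card]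
    have hXfr : finrank F ↥X = k := hdim X hXC
    have e : {W' : Submodule F ↥X // finrank F W' = m}
        ≃ {W : Submodule F (Fin v → F) // finrank F W = m ∧ W ≤ X} := {
      toFun := fun W' => ⟨Submodule.map X.subtype W'.1,
        ⟨(Submodule.finrank_map_subtype_eq X W'.1).trans W'.2, Submodule.map_subtype_le X W'.1⟩⟩
      invFun := fun W => ⟨Submodule.comap X.subtype W.1, by
        have h1 : Submodule.map X.subtype (Submodule.comap X.subtype W.1) = W.1 := by
          rw [Submodule.map_comap_subtype, inf_eq_right.mpr W.2.2]
        have := Submodule.finrank_map_subtype_eq X (Submodule.comap X.subtype W.1)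
        rw [h1] at this
        rw [← this]; exact W.2.1⟩
      left_inv := fun W' => by
        apply Subtype.ext
        apply Submodule.map_injective_of_injective X.injective_subtype
        show Submodule.map X.subtype (Submodule.comap X.subtype (Submodule.map X.subtype W'.1)) = _
        rw [Submodule.map_comap_subtype, inf_eq_right.mpr (Submodule.map_subtype_le X W'.1)]
      right_inv := fun W => by
        apply Subtype.ext
        show Submodule.map X.subtype (Submodule.comap X.subtype W.1) = W.1
        rw [Submodule.map_comap_subtype, inf_eq_right.mpr W.2.2] }
    rw [Nat.card_congr e.symm]
    haveI : Finite ↥X := Subtype.finite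
    have := card_subspaces F ↥X m (by rw [hXfr]; exact hmk)
    rw [hXfr] at this
    exact this
  -- intersections of distinct codewords are small
  have hint : ∀ X ∈ C, ∀ Y ∈ C, X ≠ Y → finrank F ↥(X ⊓ Y) ≤ k - δ := by
    intro X hXC Y hYC hne
    have h := hdist X hXC Y hYC hne
    rw [hdim X hXC, hdim Y hYC] at h
    omega
  -- the code is finite
  have hCfin : C.Finite := Set.toFinite C
  let C' : Finset (Submodule F (Fin v → F)) := hCfin.toFinset
  have hCcard : C.ncard = C'.card := Set.ncard_eq_toFinset_card C hCfin
  -- disjointness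
  have hdisj : ∀ X ∈ C', ∀ Y ∈ C', X ≠ Y →
      Disjoint (Finset.univ.filter
          (fun W : Submodule F (Fin v → F) => finrank F W = m ∧ W ≤ X))
        (Finset.univ.filter
          (fun W : Submodule F (Fin v → F) => finrank F W = m ∧ W ≤ Y)) := by
    intro X hX' Y hY' hne
    rw [Finset.disjoint_left]
    intro W hWX hWY
    simp only [Finset.mem_filter] at hWX hWY
    have hXC : X ∈ C := hCfin.mem_toFinset.mp hX'
    have hYC : Y ∈ C := hCfin.mem_toFinset.mp hY'
    have hle : W ≤ X ⊓ Y := le_inf hWX.2.2 hWY.2.2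
    have := Submodule.finrank_mono hle
    rw [hWX.2.1] at this
    have := hint X hXC Y hYC hne
    omega
  -- the union bound
  have hsub : (C'.biUnion fun X => Finset.univ.filter
        (fun W : Submodule F (Fin v → F) => finrank F W = m ∧ W ≤ X))
      ⊆ Finset.univ.filter (fun W : Submodule F (Fin v → F) => finrank F W = m) := by
    intro W hW
    rw [Finset.mem_biUnion] at hW
    obtain ⟨X, _, hWX⟩ := hW
    simp only [Finset.mem_filter] at hWX ⊢
    exact ⟨Finset.mem_univ W, hWX.2.1⟩
  calc C.ncard * gaussBinom (Fintype.card F) k m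
      = ∑ X ∈ C', (Finset.univ.filter
          (fun W : Submodule F (Fin v → F) => finrank F W = m ∧ W ≤ X)).card := by
        rw [hCcard, Finset.sum_congr rfl (fun X hX' => hX X (hCfin.mem_toFinset.mp hX')),
          Finset.sum_const, smul_eq_mul]
    _ = (C'.biUnion fun X => Finset.univ.filter
          (fun W : Submodule F (Fin v → F) => finrank F W = m ∧ W ≤ X)).card :=
        (Finset.card_biUnion hdisj).symm
    _ ≤ (Finset.univ.filter (fun W : Submodule F (Fin v → F) => finrank F W = m)).card :=
        Finset.card_le_card hsub
    _ = gaussBinom (Fintype.card F) v m := hA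
end

section
/- Let A_1, …, A_δ be finite nonempty sets, let μ_1 = Σ_j #A_j and μ_2 = Σ_{j1<j2} #(A_{j1} ∩ A_{j2}). Then for every positive integer i, #(A_1 ∪ … ∪ A_δ) ≥ 2(μ_1·i - μ_2)/(i(i+1)). -/
section Aux

variable {α : Type*} [DecidableEq α] {δ : ℕ}

theorem bonferroni_aux_count (A : Fin δ → Finset α) :
    ∑ j, (A j).card = ∑ x ∈ Finset.univ.biUnion A,
      (Finset.univ.filter (fun j => x ∈ A j)).card := by
  classical
  have h1 : ∀ j, (A j).card
      = ∑ x ∈ Finset.univ.biUnion A, if x ∈ A j then 1 else 0 := by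
    intro j
    rw [← Finset.card_filter]
    congr 1
    ext x
    simp only [Finset.mem_filter, Finset.mem_biUnion, Finset.mem_univ, true_and]
    aesop
  calc ∑ j, (A j).card
      = ∑ j, ∑ x ∈ Finset.univ.biUnion A, if x ∈ A j then 1 else 0 :=
        Finset.sum_congr rfl fun j _ => h1 j
    _ = ∑ x ∈ Finset.univ.biUnion A, ∑ j, if x ∈ A j then 1 else 0 :=
        Finset.sum_comm
    _ = _ := Finset.sum_congr rfl fun x _ => (Finset.card_filter _ _).symm

theorem bonferroni_aux_pairs (A : Fin δ → Finset α) :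
    ∑ p ∈ Finset.univ.filter (fun p : Fin δ × Fin δ => p.1 ≠ p.2),
        (A p.1 ∩ A p.2).card
      = ∑ x ∈ Finset.univ.biUnion A,
          (Finset.univ.filter (fun j => x ∈ A j)).offDiag.card := by
  classical
  have h1 : ∀ p : Fin δ × Fin δ, (A p.1 ∩ A p.2).card
      = ∑ x ∈ Finset.univ.biUnion A, if x ∈ A p.1 ∧ x ∈ A p.2 then 1 else 0 := by
    intro p
    rw [← Finset.card_filter]
    congr 1
    ext x
    simp only [Finset.mem_filter, Finset.mem_biUnion, Finset.mem_univ, true_and,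
      Finset.mem_inter]
    aesop
  calc ∑ p ∈ Finset.univ.filter (fun p : Fin δ × Fin δ => p.1 ≠ p.2),
        (A p.1 ∩ A p.2).card
      = ∑ p ∈ Finset.univ.filter (fun p : Fin δ × Fin δ => p.1 ≠ p.2),
          ∑ x ∈ Finset.univ.biUnion A, if x ∈ A p.1 ∧ x ∈ A p.2 then 1 else 0 :=
        Finset.sum_congr rfl fun p _ => h1 p
    _ = ∑ x ∈ Finset.univ.biUnion A,
          ∑ p ∈ Finset.univ.filter (fun p : Fin δ × Fin δ => p.1 ≠ p.2),
            if x ∈ A p.1 ∧ x ∈ A p.2 then 1 else 0 := Finset.sum_comm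
    _ = _ := by
        refine Finset.sum_congr rfl fun x _ => ?_
        rw [← Finset.card_filter]
        congr 1
        ext p
        simp only [Finset.mem_filter, Finset.mem_univ, true_and, Finset.mem_offDiag]
        tauto

theorem bonferroni_aux_sym (A : Fin δ → Finset α) :
    ∑ p ∈ Finset.univ.filter (fun p : Fin δ × Fin δ => p.1 ≠ p.2),
        (A p.1 ∩ A p.2).card
      = 2 * ∑ p ∈ Finset.univ.filter (fun p : Fin δ × Fin δ => p.1 < p.2),
          (A p.1 ∩ A p.2).card := by
  classical
  have hsplit := Finset.sum_filter_add_sum_filter_not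
    (Finset.univ.filter (fun p : Fin δ × Fin δ => p.1 ≠ p.2))
    (fun p : Fin δ × Fin δ => p.1 < p.2)
    (fun p : Fin δ × Fin δ => (A p.1 ∩ A p.2).card)
  have hlt : (Finset.univ.filter (fun p : Fin δ × Fin δ => p.1 ≠ p.2)).filter
      (fun p => p.1 < p.2)
      = Finset.univ.filter (fun p : Fin δ × Fin δ => p.1 < p.2) := by
    ext p
    simp only [Finset.mem_filter, Finset.mem_univ, true_and]
    exact ⟨fun h => h.2, fun h => ⟨ne_of_lt h, h⟩⟩
  have hgt : (Finset.univ.filter (fun p : Fin δ × Fin δ => p.1 ≠ p.2)).filter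
      (fun p => ¬ p.1 < p.2)
      = Finset.univ.filter (fun p : Fin δ × Fin δ => p.2 < p.1) := by
    ext p
    simp only [Finset.mem_filter, Finset.mem_univ, true_and, not_lt]
    constructor
    · rintro ⟨hne, hle⟩; exact lt_of_le_of_ne hle (fun h => hne h.symm)
    · intro h; exact ⟨(ne_of_lt h).symm, le_of_lt h⟩
  have hswap : ∑ p ∈ Finset.univ.filter (fun p : Fin δ × Fin δ => p.2 < p.1),
      (A p.1 ∩ A p.2).card
      = ∑ p ∈ Finset.univ.filter (fun p : Fin δ × Fin δ => p.1 < p.2),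
        (A p.1 ∩ A p.2).card := by
    refine Finset.sum_nbij' (fun p => (p.2, p.1)) (fun p => (p.2, p.1)) ?_ ?_ ?_ ?_ ?_
    · intro p hp; simp only [Finset.mem_filter, Finset.mem_univ, true_and] at hp ⊢; exact hp
    · intro p hp; simp only [Finset.mem_filter, Finset.mem_univ, true_and] at hp ⊢; exact hp
    · intro p _; rfl
    · intro p _; rfl
    · intro p _; simp [Finset.inter_comm]
  rw [hlt, hgt, hswap] at hsplit
  omega

end Aux

/-- Second-order Bonferroni-type lower bound for the size of a union of finite
sets. -/
theorem bonferroni_union_bound {α : Type*} [DecidableEq α] (δ : ℕ)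
    (A : Fin δ → Finset α) (hne : ∀ j, (A j).Nonempty)
    (μ1 μ2 : ℚ)
    (hμ1 : μ1 = ∑ j, ((A j).card : ℚ))
    (hμ2 : μ2 = ∑ p ∈ Finset.univ.filter (fun p : Fin δ × Fin δ => p.1 < p.2),
      ((A p.1 ∩ A p.2).card : ℚ))
    (i : ℕ) (hi : 1 ≤ i) :
    2 * (μ1 * i - μ2) / (i * (i + 1)) ≤ ((Finset.univ.biUnion A).card : ℚ) := by
  classical
  set S := Finset.univ.biUnion A with hS
  set m : α → ℕ := fun x => (Finset.univ.filter (fun j => x ∈ A j)).card with hm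
  have hpos : (0 : ℚ) < i * (i + 1) := by
    have : (1 : ℚ) ≤ (i : ℚ) := by exact_mod_cast hi
    nlinarith
  rw [div_le_iff₀ hpos]
  -- express μ1 and 2*μ2 as sums over S
  have key1 : μ1 = ∑ x ∈ S, (m x : ℚ) := by
    rw [hμ1]
    exact_mod_cast congrArg (Nat.cast : ℕ → ℚ) (bonferroni_aux_count A)
  have key2 : 2 * μ2 = ∑ x ∈ S,
      (((Finset.univ.filter (fun j => x ∈ A j)).offDiag.card : ℚ)) := by
    rw [hμ2]
    have := (bonferroni_aux_sym A).symm.trans (bonferroni_aux_pairs A)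
    exact_mod_cast congrArg (Nat.cast : ℕ → ℚ) this
  have hcard : ((S.card : ℚ)) = ∑ x ∈ S, (1 : ℚ) := by
    simp
  have expand : 2 * (μ1 * i - μ2)
      = ∑ x ∈ S, (2 * (m x : ℚ) * i
          - ((Finset.univ.filter (fun j => x ∈ A j)).offDiag.card : ℚ)) := by
    calc 2 * (μ1 * i - μ2) = 2 * μ1 * i - 2 * μ2 := by ring
      _ = 2 * (∑ x ∈ S, (m x : ℚ)) * i - ∑ x ∈ S,
            ((Finset.univ.filter (fun j => x ∈ A j)).offDiag.card : ℚ) := by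
          rw [key1, key2]
      _ = _ := by rw [Finset.sum_sub_distrib, Finset.mul_sum, Finset.sum_mul]
  rw [expand, hcard, Finset.sum_mul]
  refine Finset.sum_le_sum fun x hx => ?_
  have hx1 : 1 ≤ m x := by
    simp only [hS, Finset.mem_biUnion, Finset.mem_univ, true_and] at hx
    obtain ⟨j, hj⟩ := hx
    exact Finset.card_pos.mpr ⟨j, by simp [hj]⟩
  have hoff : ((Finset.univ.filter (fun j => x ∈ A j)).offDiag.card : ℚ)
      = (m x : ℚ) * (m x : ℚ) - (m x : ℚ) := by
    rw [Finset.offDiag_card]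
    have : m x ≤ m x * m x := Nat.le_mul_of_pos_left _ hx1
    push_cast [Nat.cast_sub this]
    change ((m x * m x - m x : ℕ) : ℚ) = _
    rw [Nat.cast_sub this, Nat.cast_mul]
  rw [hoff, one_mul]
  rcases le_or_gt (m x) i with h | h
  · have h' : (m x : ℚ) ≤ (i : ℚ) := by exact_mod_cast h
    nlinarith [mul_nonneg (sub_nonneg.mpr h') (by linarith : (0:ℚ) ≤ (i : ℚ) - m x + 1)]
  · have h' : (i : ℚ) + 1 ≤ (m x : ℚ) := by exact_mod_cast h
    nlinarith [mul_nonneg (by linarith : (0:ℚ) ≤ (m x : ℚ) - i - 1)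
      (by linarith : (0:ℚ) ≤ (m x : ℚ) - i)]
end

section
/- For q ≥ 2, the infinite product ∏_{i=1}^∞ (1 - q^{-i}) is strictly greater than 1 - q^{-1} - q^{-2}. -/
open Finset Real Filter

private lemma aux_one_sub_sum_le_prod (a : ℕ → ℝ) (h0 : ∀ i, 0 ≤ a i) (h1 : ∀ i, a i ≤ 1)
    (n : ℕ) : 1 - ∑ i ∈ range n, a i ≤ ∏ i ∈ range n, (1 - a i) := by
  induction n with
  | zero => simp
  | succ n ih =>
    rw [Finset.sum_range_succ, Finset.prod_range_succ]
    have h2 : (1 - ∑ i ∈ range n, a i) * (1 - a n) ≤ (∏ i ∈ range n, (1 - a i)) * (1 - a n) :=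
      mul_le_mul_of_nonneg_right ih (by linarith [h1 n])
    have h3 : (0:ℝ) ≤ (∑ i ∈ range n, a i) * a n :=
      mul_nonneg (Finset.sum_nonneg fun i _ => h0 i) (h0 n)
    nlinarith

/-- Euler-product estimate: for `q ≥ 2`,
`∏_{i=1}^∞ (1 - q^{-i}) > 1 - q^{-1} - q^{-2}`. -/
theorem euler_product_lower_bound (q : ℝ) (hq : 2 ≤ q) :
    (∏' i : ℕ, (1 - q⁻¹ ^ (i + 1))) > 1 - q⁻¹ - q⁻¹ ^ 2 := by
  set x : ℝ := q⁻¹ with hxdef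
  have hq0 : (0:ℝ) < q := by linarith
  have hx0 : 0 < x := inv_pos.mpr hq0
  have hx : x ≤ 1/2 := by
    rw [hxdef]
    rw [show (1:ℝ)/2 = 2⁻¹ by norm_num]
    exact inv_anti₀ (by norm_num) hq
  have hx1 : x < 1 := by linarith
  -- basic bounds on powers
  have hpow_le : ∀ i : ℕ, x ^ (i + 1) ≤ x := by
    intro i
    calc x ^ (i+1) ≤ x ^ 1 := pow_le_pow_of_le_one hx0.le hx1.le (by omega)
    _ = x := pow_one x
  have hpow_pos : ∀ i : ℕ, 0 < x ^ (i + 1) := fun i => pow_pos hx0 _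
  have hfpos : ∀ i : ℕ, 0 < 1 - x ^ (i + 1) := by
    intro i; have := hpow_le i; linarith
  -- summability of the logs
  have hgeo : Summable (fun i : ℕ => 2 * x ^ (i + 1)) := by
    have h := (summable_geometric_of_lt_one hx0.le hx1).mul_left (2 * x)
    exact h.congr fun i => by ring
  have hlog : Summable (fun i : ℕ => Real.log (1 - x ^ (i + 1))) := by
    apply Summable.of_abs
    apply Summable.of_nonneg_of_le (fun i => abs_nonneg _) _ hgeo
    intro i
    set t := x ^ (i + 1) with ht
    have ht0 : 0 < t := hpow_pos i
    have ht2 : t ≤ 1/2 := le_trans (hpow_le i) hx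
    have hlt : Real.log (1 - t) ≤ 0 := Real.log_nonpos (by linarith) (by linarith)
    rw [abs_of_nonpos hlt]
    have h1 : -Real.log (1 - t) = Real.log (1 - t)⁻¹ := (Real.log_inv _).symm
    rw [h1]
    have h2 : Real.log (1 - t)⁻¹ ≤ (1 - t)⁻¹ - 1 :=
      Real.log_le_sub_one_of_pos (inv_pos.mpr (by linarith))
    have h4 : (1 - t) * (1 - t)⁻¹ = 1 := mul_inv_cancel₀ (by linarith)
    nlinarith [h2, h4, ht0.le, ht2]
  -- multipliability
  have hm : Multipliable (fun i : ℕ => 1 - x ^ (i + 1)) :=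
    Real.multipliable_of_summable_log hfpos hlog
  have htend : Tendsto (fun n => ∏ i ∈ range n, (1 - x ^ (i + 1))) atTop
      (nhds (∏' i : ℕ, (1 - x ^ (i + 1)))) := hm.hasProd.tendsto_prod_nat
  -- lower bound for partial products
  set B : ℝ := (1 - x) * (1 - x ^ 2) * (1 - x ^ 3 * (1 - x)⁻¹) with hBdef
  have hBval : B = 1 - x - x ^ 2 + x ^ 5 := by
    have hne : (1 : ℝ) - x ≠ 0 := by linarith
    rw [hBdef]
    field_simp
    ring
  have hstep : ∀ n : ℕ, 2 ≤ n → B ≤ ∏ i ∈ range n, (1 - x ^ (i + 1)) := by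
    intro n hn
    rw [← Finset.prod_range_mul_prod_Ico _ hn]
    have h2 : ∏ i ∈ range 2, (1 - x ^ (i + 1)) = (1 - x) * (1 - x ^ 2) := by
      simp [Finset.prod_range_succ, pow_one]
    rw [h2, Finset.prod_Ico_eq_prod_range]
    have htail : 1 - x ^ 3 * (1 - x)⁻¹ ≤ ∏ i ∈ range (n - 2), (1 - x ^ (2 + i + 1)) := by
      have hb := aux_one_sub_sum_le_prod (fun i => x ^ (2 + i + 1))
        (fun i => (pow_pos hx0 _).le)
        (fun i => le_trans (hpow_le (2 + i)) (by linarith)) (n - 2)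
      refine le_trans ?_ hb
      have hsum : ∑ i ∈ range (n - 2), x ^ (2 + i + 1) ≤ x ^ 3 * (1 - x)⁻¹ := by
        have : ∑ i ∈ range (n - 2), x ^ (2 + i + 1) = x ^ 3 * ∑ i ∈ range (n - 2), x ^ i := by
          rw [Finset.mul_sum]
          refine Finset.sum_congr rfl fun i _ => ?_
          ring
        rw [this]
        have hge : ∑ i ∈ range (n - 2), x ^ i ≤ (1 - x)⁻¹ := by
          rw [← tsum_geometric_of_lt_one hx0.le hx1]
          exact Summable.sum_le_tsum _ (fun i _ => (pow_pos hx0 i).le)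
            (summable_geometric_of_lt_one hx0.le hx1)
        exact mul_le_mul_of_nonneg_left hge (pow_pos hx0 3).le
      linarith
    have hprodnn : (0:ℝ) ≤ (1 - x) * (1 - x ^ 2) := by
      have := hfpos 1
      have h1 : (0:ℝ) < 1 - x := by linarith
      have h2 : (0:ℝ) < 1 - x ^ 2 := by nlinarith
      positivity
    calc B = (1 - x) * (1 - x ^ 2) * (1 - x ^ 3 * (1 - x)⁻¹) := hBdef
    _ ≤ (1 - x) * (1 - x ^ 2) * ∏ i ∈ range (n - 2), (1 - x ^ (2 + i + 1)) :=
        mul_le_mul_of_nonneg_left htail hprodnn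
  have hge : B ≤ ∏' i : ℕ, (1 - x ^ (i + 1)) :=
    ge_of_tendsto htend (eventually_atTop.mpr ⟨2, fun n hn => hstep n hn⟩)
  have hfinal : 1 - x - x ^ 2 < B := by
    rw [hBval]
    have : 0 < x ^ 5 := pow_pos hx0 5
    linarith
  calc 1 - x - x ^ 2 < B := hfinal
  _ ≤ _ := hge
end

section
/- Let C be a subspace code in a v-dimensional space V over F_q with minimum subspace distance d ≥ 2, and let (P,H) be a non-incident point-hyperplane pair (dim P = 1, dim H = v-1, P ⊄ H). If X ∈ C with X ⊆ H and Y ∈ C with P ⊆ Y, then d_S(X, Y∩H) = d_S(X,Y) - 1. Consequently the shortened code C|_H^P = {X ∈ C : X ⊆ H} ∪ {Y∩H : Y ∈ C, P ⊆ Y} has minimum subspace distance at least d-1. -/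
open Module

/-- The subspace distance. -/
noncomputable def dS {K V : Type*} [Field K] [AddCommGroup V] [Module K V]
    (X Y : Submodule K V) : ℤ :=
  (finrank K X : ℤ) + finrank K Y - 2 * finrank K ↥(X ⊓ Y)

lemma dS_comm {K V : Type*} [Field K] [AddCommGroup V] [Module K V]
    (X Y : Submodule K V) : dS X Y = dS Y X := by
  unfold dS; rw [inf_comm]; ring

/-- Shortening a subspace code in a non-incident point-hyperplane pair decreases
the minimum subspace distance by at most one. -/
theorem shortening_subspace_code (K : Type*) [Field K] (V : Type*) [AddCommGroup V]
    [Module K V] [FiniteDimensional K V] (v : ℕ) (hv : finrank K V = v)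
    (d : ℕ) (hd : 2 ≤ d) (C : Set (Submodule K V))
    (hC : ∀ X ∈ C, ∀ Y ∈ C, X ≠ Y → (d : ℤ) ≤ dS X Y)
    (P H : Submodule K V) (hP : finrank K P = 1) (hH : finrank K H = v - 1)
    (hPH : ¬ P ≤ H) :
    (∀ X ∈ C, X ≤ H → ∀ Y ∈ C, P ≤ Y → dS X (Y ⊓ H) = dS X Y - 1) ∧
    (∀ Z ∈ ({X | X ∈ C ∧ X ≤ H} ∪ {Z | ∃ Y ∈ C, P ≤ Y ∧ Z = Y ⊓ H} :
        Set (Submodule K V)),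
     ∀ W ∈ ({X | X ∈ C ∧ X ≤ H} ∪ {Z | ∃ Y ∈ C, P ≤ Y ∧ Z = Y ⊓ H} :
        Set (Submodule K V)),
      Z ≠ W → (d : ℤ) - 1 ≤ dS Z W) := by
  have hv1 : 1 ≤ v := by
    have := Submodule.finrank_le P
    omega
  -- key : intersecting a subspace not contained in H with H drops dimension by 1
  have key : ∀ W : Submodule K V, ¬ W ≤ H →
      finrank K ↥(W ⊓ H) + 1 = finrank K W := by
    intro W hW
    have hlt : H < W ⊔ H := right_lt_sup.mpr hW
    have h1 : finrank K ↥H < finrank K ↥(W ⊔ H) :=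
      Submodule.finrank_lt_finrank_of_lt hlt
    have h2 : finrank K ↥(W ⊔ H) ≤ finrank K V := Submodule.finrank_le _
    have h3 : finrank K ↥(W ⊔ H) = v := by omega
    have h4 := Submodule.finrank_sup_add_finrank_inf_eq W H
    omega
  have hfirst : ∀ X ∈ C, X ≤ H → ∀ Y ∈ C, P ≤ Y → dS X (Y ⊓ H) = dS X Y - 1 := by
    intro X _ hXH Y _ hPY
    have hYH : ¬ Y ≤ H := fun h => hPH (hPY.trans h)
    have h1 := key Y hYH
    have h2 : X ⊓ (Y ⊓ H) = X ⊓ Y := by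
      rw [inf_comm Y H, ← inf_assoc, inf_eq_left.mpr hXH]
    simp only [dS]
    rw [h2]
    omega
  refine ⟨hfirst, ?_⟩
  have hne : ∀ X ≤ H, ∀ Y, P ≤ Y → X ≠ Y := by
    intro X hX Y hY h
    exact hPH ((h ▸ hY).trans hX)
  rintro Z (⟨hZC, hZH⟩ | ⟨Y, hYC, hPY, rfl⟩) W (⟨hWC, hWH⟩ | ⟨Y', hY'C, hPY', rfl⟩) hZW
  · have := hC Z hZC W hWC hZW
    omega
  · have h := hfirst Z hZC hZH Y' hY'C hPY'
    have := hC Z hZC Y' hY'C (hne Z hZH Y' hPY')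
    omega
  · have h := hfirst W hWC hWH Y hYC hPY
    have := hC W hWC Y hYC (hne W hWH Y hPY)
    rw [dS_comm]
    omega
  · have hYY' : Y ≠ Y' := by rintro rfl; exact hZW rfl
    have hd2 := hC Y hYC Y' hY'C hYY'
    have h1 := key Y (fun h => hPH (hPY.trans h))
    have h2 := key Y' (fun h => hPH (hPY'.trans h))
    have h3 := key (Y ⊓ Y') (fun h => hPH ((le_inf hPY hPY').trans h))
    have h4 : (Y ⊓ H) ⊓ (Y' ⊓ H) = (Y ⊓ Y') ⊓ H := by
      rw [inf_assoc, inf_comm H, inf_assoc, inf_idem, ← inf_assoc]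
    simp only [dS] at *
    rw [h4]
    omega
end

section
/- For subspaces X, Y of a finite-dimensional vector space V and a 1-dimensional subspace P of V, d_S(X+P, Y+P) ∈ {d_S(X,Y), d_S(X,Y)-2} if P ⊄ X and P ⊄ Y, and d_S(X+P, Y+P) ∈ {d_S(X,Y)+1, d_S(X,Y)-1} if P ⊄ X and P ⊆ Y. -/
open Module

lemma finrank_sup_point {K V : Type*} [Field K] [AddCommGroup V] [Module K V]
    [FiniteDimensional K V] {Z P : Submodule K V} (hP : finrank K P = 1)
    (h : ¬ P ≤ Z) : finrank K ↥(Z ⊔ P) = finrank K Z + 1 := by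
  have hZP : Z ⊓ P = ⊥ := by
    rcases lt_or_eq_of_le (inf_le_right : Z ⊓ P ≤ P) with hlt | heq
    · have hlt' := Submodule.finrank_lt_finrank_of_lt hlt
      rw [hP] at hlt'
      have : finrank K ↥(Z ⊓ P) = 0 := by omega
      exact Submodule.finrank_eq_zero.mp this
    · exact absurd (heq ▸ inf_le_left : P ≤ Z) h
  have hs := Submodule.finrank_sup_add_finrank_inf_eq Z P
  rw [hZP, hP, finrank_bot] at hs
  omega

/-- Behaviour of the subspace distance under puncturing in a point `P`. -/
theorem puncturing_distance (K : Type*) [Field K] (V : Type*) [AddCommGroup V]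
    [Module K V] [FiniteDimensional K V] (X Y P : Submodule K V)
    (hP : finrank K P = 1) :
    ((¬ P ≤ X ∧ ¬ P ≤ Y) →
      dS (X ⊔ P) (Y ⊔ P) = dS X Y ∨ dS (X ⊔ P) (Y ⊔ P) = dS X Y - 2) ∧
    ((¬ P ≤ X ∧ P ≤ Y) →
      dS (X ⊔ P) (Y ⊔ P) = dS X Y + 1 ∨ dS (X ⊔ P) (Y ⊔ P) = dS X Y - 1) := by
  have hXY := Submodule.finrank_sup_add_finrank_inf_eq X Y
  constructor
  · rintro ⟨hX, hY⟩
    have hfX := finrank_sup_point hP hX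
    have hfY := finrank_sup_point hP hY
    have hsup : (X ⊔ P) ⊔ (Y ⊔ P) = (X ⊔ Y) ⊔ P := by
      rw [sup_assoc, sup_comm P (Y ⊔ P), sup_assoc, sup_idem, ← sup_assoc]
    have hXPY := Submodule.finrank_sup_add_finrank_inf_eq (X ⊔ P) (Y ⊔ P)
    rw [hsup, hfX, hfY] at hXPY
    by_cases hPXY : P ≤ X ⊔ Y
    · right
      rw [sup_eq_left.mpr hPXY] at hXPY
      simp only [dS]
      push_cast
      omega
    · left
      rw [finrank_sup_point hP hPXY] at hXPY
      simp only [dS]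
      push_cast
      omega
  · rintro ⟨hX, hY⟩
    right
    have hfX := finrank_sup_point hP hX
    have hYP : Y ⊔ P = Y := sup_eq_left.mpr hY
    have hsup : (X ⊔ P) ⊔ Y = X ⊔ Y := by
      rw [sup_assoc, sup_comm P Y, hYP]
    have hXPY := Submodule.finrank_sup_add_finrank_inf_eq (X ⊔ P) Y
    rw [hsup, hfX] at hXPY
    rw [hYP]
    simp only [dS]
    push_cast
    omega
end

section
/- Let H be a hyperplane of PG(2k, F_q) (i.e., a 2k-dimensional subspace of F_{q}^{2k+1}) and let S be a partial (k-1)-spread of size q^{k+1}+1, i.e., a set of q^{k+1}+1 pairwise-intersecting-trivially k-dimensional subspaces of F_q^{2k+1}. If H contains exactly t members of S, then 1 ≤ t ≤ q+1. -/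
open Module

/-- A hyperplane of `PG(2k, F_q)` contains between `1` and `q+1` members of a
maximal partial `(k-1)`-spread of size `q^{k+1}+1`. -/
theorem hyperplane_meets_partial_spread (q : ℕ) (F : Type*) [Field F] [Fintype F]
    (hq : Fintype.card F = q) (k : ℕ) (hk : 1 ≤ k)
    (H : Submodule F (Fin (2 * k + 1) → F)) (hH : finrank F H = 2 * k)
    (S : Set (Submodule F (Fin (2 * k + 1) → F)))
    (hcard : S.ncard = q ^ (k + 1) + 1)
    (hdim : ∀ X ∈ S, finrank F X = k)
    (hspread : ∀ X ∈ S, ∀ Y ∈ S, X ≠ Y → X ⊓ Y = ⊥)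
    (t : ℕ) (ht : t = {X ∈ S | X ≤ H}.ncard) :
    1 ≤ t ∧ t ≤ q + 1 := by
  classical
  obtain ⟨m, rfl⟩ : ∃ m, k = m + 1 := ⟨k - 1, (Nat.succ_pred_eq_of_pos hk).symm⟩
  set V := (Fin (2 * (m + 1) + 1) → F) with hVdef
  have hq2 : 2 ≤ q := hq ▸ Fintype.one_lt_card
  have hV : finrank F V = 2 * (m + 1) + 1 := by
    show finrank F (Fin (2 * (m + 1) + 1) → F) = 2 * (m + 1) + 1
    simp
  -- cardinality of a submodule
  have cardsub : ∀ W : Submodule F V, (W : Set V).toFinset.card = q ^ finrank F W := by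
    intro W
    rw [Set.toFinset_card, ← hq]
    exact card_eq_pow_finrank
  have hcardV : Fintype.card V = q ^ (2 * (m + 1) + 1) := by
    have h := card_eq_pow_finrank (K := F) (V := V)
    rw [hq, hV] at h; exact h
  -- finiteness of S
  have hSfin : S.Finite := Set.finite_of_ncard_ne_zero (by rw [hcard]; positivity)
  set Sf := hSfin.toFinset with hSfdef
  have hmemSf : ∀ X, X ∈ Sf ↔ X ∈ S := fun X => hSfin.mem_toFinset
  have hSfcard : Sf.card = q ^ (m + 2) + 1 := by
    rw [← hcard, Set.ncard_eq_toFinset_card S hSfin]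
  -- t as a filter card
  set T := Sf.filter (fun X => X ≤ H) with hTdef
  have hTcard : T.card = t := by
    rw [ht]
    have : {X ∈ S | X ≤ H} = ↑T := by
      ext X; simp [hTdef, hmemSf]
    rw [this, Set.ncard_coe_finset]
  have htle : t ≤ q ^ (m + 2) + 1 := by
    rw [← hTcard, ← hSfcard]; exact Finset.card_le_card (Finset.filter_subset _ _)
  -- dimension of intersections
  have hdinf : ∀ X ∈ Sf, ¬ X ≤ H → finrank F ↥(X ⊓ H) = m := by
    intro X hX hXH
    have hXS : X ∈ S := (hmemSf X).mp hX
    have h1 : H < X ⊔ H := by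
      rcases lt_or_eq_of_le (le_sup_right : H ≤ X ⊔ H) with h | h
      · exact h
      · exact absurd (sup_eq_right.mp h.symm) hXH
    have h2 : finrank F ↥(X ⊔ H) = 2 * (m + 1) + 1 := by
      have hlt := Submodule.finrank_lt_finrank_of_lt h1
      have hle : finrank F ↥(X ⊔ H) ≤ finrank F V := Submodule.finrank_le _
      rw [hH] at hlt; rw [hV] at hle; omega
    have h3 := Submodule.finrank_sup_add_finrank_inf_eq X H
    rw [hdim X hXS, hH, h2] at h3
    omega
  have hdinf' : ∀ X ∈ Sf, X ≤ H → finrank F ↥(X ⊓ H) = m + 1 := by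
    intro X hX hXH
    rw [inf_eq_left.mpr hXH]
    exact hdim X ((hmemSf X).mp hX)
  -- the two counting inequalities
  -- upper bound: nonzero vectors of H covered
  set f : Submodule F V → Finset V := fun X => ((X ⊓ H : Submodule F V) : Set V).toFinset.erase 0 with hfdef
  have hfcard : ∀ X : Submodule F V, (f X).card = q ^ finrank F ↥(X ⊓ H) - 1 := by
    intro X
    rw [hfdef]
    simp only
    rw [Finset.card_erase_of_mem (by simp), cardsub]
  have hfdisj : ∀ X ∈ Sf, ∀ Y ∈ Sf, X ≠ Y → Disjoint (f X) (f Y) := by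
    intro X hX Y hY hne
    rw [Finset.disjoint_left]
    intro v hvX hvY
    have h0 : v ≠ 0 := (Finset.mem_erase.mp hvX).1
    have hX' : v ∈ X ⊓ H := Set.mem_toFinset.mp (Finset.mem_erase.mp hvX).2
    have hY' : v ∈ Y ⊓ H := Set.mem_toFinset.mp (Finset.mem_erase.mp hvY).2
    have : v ∈ X ⊓ Y := ⟨hX'.1, hY'.1⟩
    rw [hspread X ((hmemSf X).mp hX) Y ((hmemSf Y).mp hY) hne] at this
    exact h0 this
  have key1 : ∑ X ∈ Sf, (q ^ finrank F ↥(X ⊓ H) - 1) ≤ q ^ (2 * (m + 1)) - 1 := by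
    calc ∑ X ∈ Sf, (q ^ finrank F ↥(X ⊓ H) - 1) = ∑ X ∈ Sf, (f X).card := by
          exact Finset.sum_congr rfl fun X _ => (hfcard X).symm
      _ = (Sf.biUnion f).card := (Finset.card_biUnion hfdisj).symm
      _ ≤ ((H : Set V).toFinset.erase 0).card := by
          apply Finset.card_le_card
          intro v hv
          obtain ⟨X, hX, hvX⟩ := Finset.mem_biUnion.mp hv
          refine Finset.mem_erase.mpr ⟨(Finset.mem_erase.mp hvX).1, ?_⟩
          exact Set.mem_toFinset.mpr (Set.mem_toFinset.mp (Finset.mem_erase.mp hvX).2).2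
      _ = q ^ (2 * (m + 1)) - 1 := by
          rw [Finset.card_erase_of_mem (by simp), cardsub, hH]
  -- lower bound: vectors outside H covered
  set g : Submodule F V → Finset V := fun X => (X : Set V).toFinset \ (H : Set V).toFinset with hgdef
  have hgcard : ∀ X ∈ Sf, (g X).card = q ^ (m + 1) - q ^ finrank F ↥(X ⊓ H) := by
    intro X hX
    have hXS : X ∈ S := (hmemSf X).mp hX
    have heq : (X : Set V).toFinset \ (H : Set V).toFinset
        = (X : Set V).toFinset \ ((X ⊓ H : Submodule F V) : Set V).toFinset := by
      ext v
      simp only [Finset.mem_sdiff, Set.mem_toFinset, SetLike.mem_coe, Submodule.mem_inf]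
      tauto
    rw [hgdef]; simp only
    rw [heq, Finset.card_sdiff_of_subset (by
      intro v hv
      simp only [Set.mem_toFinset, SetLike.mem_coe, Submodule.mem_inf] at hv ⊢
      exact hv.1), cardsub, cardsub, hdim X hXS]
  have hgdisj : ∀ X ∈ Sf, ∀ Y ∈ Sf, X ≠ Y → Disjoint (g X) (g Y) := by
    intro X hX Y hY hne
    rw [Finset.disjoint_left]
    intro v hvX hvY
    have hvH : v ∉ (H : Set V).toFinset := (Finset.mem_sdiff.mp hvX).2
    have hX' : v ∈ X := Set.mem_toFinset.mp (Finset.mem_sdiff.mp hvX).1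
    have hY' : v ∈ Y := Set.mem_toFinset.mp (Finset.mem_sdiff.mp hvY).1
    have : v ∈ X ⊓ Y := ⟨hX', hY'⟩
    rw [hspread X ((hmemSf X).mp hX) Y ((hmemSf Y).mp hY) hne] at this
    exact hvH (Set.mem_toFinset.mpr (by rw [this]; exact H.zero_mem))
  have key2 : ∑ X ∈ Sf, (q ^ (m + 1) - q ^ finrank F ↥(X ⊓ H)) ≤ q ^ (2 * (m + 1) + 1) - q ^ (2 * (m + 1)) := by
    calc ∑ X ∈ Sf, (q ^ (m + 1) - q ^ finrank F ↥(X ⊓ H)) = ∑ X ∈ Sf, (g X).card :=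
          Finset.sum_congr rfl fun X hX => (hgcard X hX).symm
      _ = (Sf.biUnion g).card := (Finset.card_biUnion hgdisj).symm
      _ ≤ (Finset.univ \ (H : Set V).toFinset).card := by
          apply Finset.card_le_card
          intro v hv
          obtain ⟨X, hX, hvX⟩ := Finset.mem_biUnion.mp hv
          exact Finset.mem_sdiff.mpr ⟨Finset.mem_univ v, (Finset.mem_sdiff.mp hvX).2⟩
      _ = q ^ (2 * (m + 1) + 1) - q ^ (2 * (m + 1)) := by
          rw [Finset.card_sdiff_of_subset (Finset.subset_univ _), Finset.card_univ, cardsub, hH, hcardV]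
  -- split the sums over T
  have hsplit : ∀ (c : ℕ → ℕ), ∑ X ∈ Sf, c (finrank F ↥(X ⊓ H))
      = t * c (m + 1) + (q ^ (m + 2) + 1 - t) * c m := by
    intro c
    rw [← Finset.sum_filter_add_sum_filter_not Sf (fun X => X ≤ H)]
    have e1 : ∑ X ∈ Sf.filter (fun X => X ≤ H), c (finrank F ↥(X ⊓ H)) = t * c (m + 1) := by
      rw [Finset.sum_congr rfl (fun X hX => by
        rw [hdinf' X (Finset.mem_filter.mp hX).1 (Finset.mem_filter.mp hX).2])]
      rw [Finset.sum_const, ← hTdef, hTcard, smul_eq_mul]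
    have e2 : ∑ X ∈ Sf.filter (fun X => ¬ X ≤ H), c (finrank F ↥(X ⊓ H))
        = (q ^ (m + 2) + 1 - t) * c m := by
      rw [Finset.sum_congr rfl (fun X hX => by
        rw [hdinf X (Finset.mem_filter.mp hX).1 (Finset.mem_filter.mp hX).2])]
      rw [Finset.sum_const, smul_eq_mul]
      congr 1
      have := Finset.card_filter_add_card_filter_not (s := Sf) (p := fun X => X ≤ H)
      rw [← hTdef, hTcard, hSfcard] at this
      omega
    rw [e1, e2]
  have hU := key1
  rw [hsplit (fun d => q ^ d - 1)] at hU
  have hL := key2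
  rw [hsplit (fun d => q ^ (m + 1) - q ^ d)] at hL
  -- pass to the integers
  have h1 : 1 ≤ q ^ (m + 1) := Nat.one_le_pow _ _ (by omega)
  have h2 : 1 ≤ q ^ m := Nat.one_le_pow _ _ (by omega)
  have h3 : 1 ≤ q ^ (2 * (m + 1)) := Nat.one_le_pow _ _ (by omega)
  have h4 : q ^ m ≤ q ^ (m + 1) := Nat.pow_le_pow_right (by omega) (by omega)
  have h5 : q ^ (2 * (m + 1)) ≤ q ^ (2 * (m + 1) + 1) := Nat.pow_le_pow_right (by omega) (by omega)
  zify [Nat.sub_self, h1, h2, h3, h4, h5, htle] at hU hL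
  set A := (q : ℤ) ^ m with hAdef
  have hA1 : 1 ≤ A := one_le_pow₀ (by exact_mod_cast (by omega : 1 ≤ q))
  have e1 : (q : ℤ) ^ (m + 1) = A * q := by rw [hAdef, pow_succ]
  have e2 : (q : ℤ) ^ (m + 2) = A * q ^ 2 := by rw [hAdef, pow_add]
  have e3 : (q : ℤ) ^ (2 * (m + 1)) = A * A * q ^ 2 := by
    rw [show 2 * (m + 1) = m + (m + 2) from by ring, pow_add, e2, ← hAdef]; ring
  have e4 : (q : ℤ) ^ (2 * (m + 1) + 1) = A * A * q ^ 3 := by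
    rw [show 2 * (m + 1) + 1 = (m + (m + 2)) + 1 from by ring, pow_succ, pow_add, e2, ← hAdef]; ring
  rw [e1, e2, e3] at hU
  rw [e1, e2, e3, e4] at hL
  have hq2' : (2 : ℤ) ≤ (q : ℤ) := by exact_mod_cast hq2
  have hApos : (0 : ℤ) < A := pow_pos (by exact_mod_cast (by omega : 0 < q)) m
  have hpos : 0 < A * ((q : ℤ) - 1) := mul_pos hApos (by linarith)
  constructor
  · -- lower bound
    have hmul : (A * (q:ℤ) ^ 2 + 1 - t) * (A * ((q:ℤ) - 1)) ≤ (A * (q:ℤ) ^ 2) * (A * ((q:ℤ) - 1)) := by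
      linarith [hL]
    have := le_of_mul_le_mul_right hmul hpos
    have : (1 : ℤ) ≤ (t : ℤ) := by linarith
    exact_mod_cast this
  · -- upper bound
    have hmul : (t : ℤ) * (A * ((q:ℤ) - 1)) ≤ ((q:ℤ) + 1) * (A * ((q:ℤ) - 1)) := by
      linarith [hU]
    have := le_of_mul_le_mul_right hmul hpos
    have : (t : ℤ) ≤ (q : ℤ) + 1 := by linarith
    exact_mod_cast this
end
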